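/- arXiv:1705.03028 — 2 statements merged into one kernel-verified Lean document; each statement's English description precedes it below -/
import Mathlib

section
/- In the broadcast tree on subsets of a finite set A ordered so that attribute costs are non-increasing (attribute with larger index has smaller or equal cost), if a node S ⊊ A is such that its tree-parent S ∪ {ρ(S)} is unaffordable, then every parent of S in the lattice (every set S ∪ {a} for a ∈ A \ S) is unaffordable. Hence any affordable node generated in the tree is maximal affordable. -/
/-- with attributes ordered so that costs are non-increasing in the
index, if the tree-parent of `S` (adding the largest-index, hence cheapest, missing
attribute `ρ(S)`) is unaffordable, then every lattice-parent of `S` is unaffordable;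
hence an affordable node generated in the broadcast tree is maximal affordable. -/
theorem stmt_5 {m : ℕ} (cost : Fin m → ℝ)
    (hnonneg : ∀ i, 0 ≤ cost i)
    (hmono : ∀ i j : Fin m, i ≤ j → cost j ≤ cost i)
    (B : ℝ) (S : Finset (Fin m)) (hS : (Finset.univ \ S).Nonempty)
    (hpar : ¬ (∑ a ∈ insert ((Finset.univ \ S).max' hS) S, cost a ≤ B)) :
    ∀ a ∉ S, ¬ (∑ b ∈ insert a S, cost b ≤ B) := by
  intro a ha hle
  set r := (Finset.univ \ S).max' hS with hr
  have hrmem : r ∈ Finset.univ \ S := Finset.max'_mem _ hS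
  have hrS : r ∉ S := (Finset.mem_sdiff.mp hrmem).2
  have har : a ≤ r := Finset.le_max' _ a (Finset.mem_sdiff.mpr ⟨Finset.mem_univ a, ha⟩)
  apply hpar
  rw [Finset.sum_insert hrS]
  rw [Finset.sum_insert ha] at hle
  calc cost r + ∑ b ∈ S, cost b ≤ cost a + ∑ b ∈ S, cost b := by
        linarith [hmono a r har]
    _ ≤ B := hle
end

section
/- Rule-1 assignment correctness: given maximal frequent nodes F_1, …, F_r with corresponding initial patterns P_j (pattern with X at positions in F_j and 0 elsewhere) and bipartite graphs G_j with edges ξ_{k,l} for each attribute a_k ∈ F_j and each l < j with a_k ∉ F_l, every frequent node S (subset of some F_j) satisfies the Rule-1 condition (for every l < j represented in G_j there is some a_k ∈ S with edge ξ_{k,l}) for exactly one index j, namely the first j with S ⊆ F_j. -/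
/-- Rule-1 assignment correctness: if `S` is frequent (a subset of
some maximal frequent node `F j`), then `S` satisfies the Rule-1 condition
(`S ⊆ F j` and for every `l < j` some `a ∈ S` has `a ∉ F l`) for exactly one
index `j`, namely the first `j` with `S ⊆ F j`. -/
theorem stmt_14 {α : Type*} [DecidableEq α] (r : ℕ) (F : Fin r → Finset α)
    (S : Finset α) (hS : ∃ j : Fin r, S ⊆ F j) :
    (∃! j : Fin r, S ⊆ F j ∧ ∀ l : Fin r, l < j → ∃ a ∈ S, a ∉ F l) ∧
    (∀ j : Fin r,
      (S ⊆ F j ∧ ∀ l : Fin r, l < j → ∃ a ∈ S, a ∉ F l) ↔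
      (S ⊆ F j ∧ ∀ l : Fin r, l < j → ¬ S ⊆ F l)) := by
  have key : ∀ j : Fin r,
      (S ⊆ F j ∧ ∀ l : Fin r, l < j → ∃ a ∈ S, a ∉ F l) ↔
      (S ⊆ F j ∧ ∀ l : Fin r, l < j → ¬ S ⊆ F l) := by
    intro j
    constructor
    · rintro ⟨h1, h2⟩
      exact ⟨h1, fun l hl => Finset.not_subset.mpr (h2 l hl)⟩
    · rintro ⟨h1, h2⟩
      exact ⟨h1, fun l hl => Finset.not_subset.mp (h2 l hl)⟩
  refine ⟨?_, key⟩
  obtain ⟨j, hj⟩ := hS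
  classical
  set T : Finset (Fin r) := Finset.univ.filter (fun i => S ⊆ F i) with hT
  have hne : T.Nonempty := ⟨j, by simp [hT, hj]⟩
  set m := T.min' hne with hm
  have hmS : S ⊆ F m := by
    have := T.min'_mem hne
    simpa [hT] using this
  have hmin : ∀ l : Fin r, l < m → ¬ S ⊆ F l := by
    intro l hl hsub
    have : m ≤ l := T.min'_le l (by simp [hT, hsub])
    exact absurd hl (not_lt.mpr this)
  refine ⟨m, (key m).mpr ⟨hmS, hmin⟩, ?_⟩
  intro k hk
  rw [key k] at hk
  obtain ⟨hk1, hk2⟩ := hk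
  by_contra hne'
  rcases lt_or_gt_of_ne hne' with h | h
  · exact hmin k h hk1
  · exact hk2 m h hmS
end
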